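/- Let λ - μ = β₁ + ... + β_k with βᵢ positive roots and k minimal, and suppose ⟨α∨, μ⟩ ≥ -1 for all positive roots α. Setting μᵢ := λ - β₁ - ... - βᵢ, one has ⟨βⱼ∨, μᵢ⟩ ≥ -1 for all j ≤ i. -/

import Mathlib

/-!
If `⟨βⱼ∨, μᵢ⟩ < -1` for some `j < i`, write `μᵢ = μ + βᵢ + ... + β_{k-1}`. Since `⟨βⱼ∨, μ⟩ ≥ -1`,
some later summand `βₜ` pairs negatively with `βⱼ`, so `βⱼ + βₜ` is a positive root. Merging
`βⱼ` and `βₜ` into this single root decomposes `λ - μ` into `k - 1` positive roots,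
contradicting the minimality of `k`.
-/

open Finset

section Merging

variable {M : Type*}

def eraseAt (f : ℕ → M) (t : ℕ) : ℕ → M :=
  fun s => if s < t then f s else f (s + 1)

theorem sum_range_succ_eq_add_sum_eraseAt [AddCommMonoid M] (f : ℕ → M) {t n : ℕ}
    (ht : t ≤ n) : ∑ s ∈ range (n + 1), f s = f t + ∑ s ∈ range n, eraseAt f t s := by
  have hlow : ∑ s ∈ range t, eraseAt f t s = ∑ s ∈ range t, f s :=
    sum_congr rfl fun s hs => if_pos (mem_range.1 hs)
  have hhigh : ∑ s ∈ Ico t n, eraseAt f t s = ∑ s ∈ Ico (t + 1) (n + 1), f s := by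
    rw [← sum_Ico_add']
    exact sum_congr rfl fun s hs => if_neg (not_lt.2 (mem_Ico.1 hs).1)
  rw [← sum_range_add_sum_Ico _ ht, ← sum_range_add_sum_Ico _ (ht.trans n.le_succ),
    sum_eq_sum_Ico_succ_bot (Nat.lt_succ_of_le ht), hlow, hhigh]
  abel

theorem eraseAt_mem {S : Set M} {f : ℕ → M} {n : ℕ} (hf : ∀ i < n + 1, f i ∈ S) (t : ℕ) :
    ∀ s < n, eraseAt f t s ∈ S := by
  intro s hs
  unfold eraseAt
  split_ifs
  · exact hf s (by omega)
  · exact hf (s + 1) (by omega)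

theorem sum_range_eraseAt_update_add [AddCancelCommMonoid M] (β : ℕ → M) {j t n : ℕ}
    (hjt : j < t) (htn : t ≤ n) :
    ∑ s ∈ range n, eraseAt (Function.update β j (β j + β t)) t s
      = ∑ s ∈ range (n + 1), β s := by
  have hj : j ∈ range (n + 1) := mem_range.2 (by omega)
  apply add_left_cancel (a := β t)
  calc β t + ∑ s ∈ range n, eraseAt (Function.update β j (β j + β t)) t s
      = ∑ s ∈ range (n + 1), Function.update β j (β j + β t) s := by
        rw [sum_range_succ_eq_add_sum_eraseAt _ htn, Function.update_of_ne hjt.ne']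
    _ = β t + ∑ s ∈ range (n + 1), β s := by
        rw [sum_update_of_mem hj, ← add_sum_erase _ _ hj, sdiff_singleton_eq_erase, add_comm (β j),
          add_assoc]

theorem add_notMem_of_length_minimal [AddCancelCommMonoid M] {S : Set M} {x : M} {k : ℕ}
    {β : ℕ → M} (hβ : ∀ i < k, β i ∈ S) (hx : x = ∑ i ∈ range k, β i)
    (hmin : ∀ (m : ℕ) (γ : ℕ → M), (∀ i < m, γ i ∈ S) → x = ∑ i ∈ range m, γ i → k ≤ m)
    {j t : ℕ} (hjt : j < t) (htk : t < k) : β j + β t ∉ S := by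
  intro hS
  obtain ⟨n, rfl⟩ : ∃ n, k = n + 1 := ⟨k - 1, by omega⟩
  have hupdate : ∀ i < n + 1, Function.update β j (β j + β t) i ∈ S := by
    intro i hi
    rcases eq_or_ne i j with rfl | hij
    · rwa [Function.update_self]
    · rw [Function.update_of_ne hij]
      exact hβ i hi
  have := hmin n _ (eraseAt_mem hupdate t)
    (by rw [sum_range_eraseAt_update_add β hjt (by omega), hx])
  omega

end Merging

theorem slices_intermediate_pairings_ge_neg_one_general
    {V : Type*} [AddCommGroup V] [Module ℝ V]
    (Δpos : Finset V)
    (coroot : V → Module.Dual ℝ V)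
    (hkey : ∀ a ∈ Δpos, ∀ b ∈ Δpos, coroot a b < 0 → a + b ∈ Δpos)
    (lam mu : V)
    (hmu : ∀ α ∈ Δpos, -1 ≤ coroot α mu)
    (k : ℕ) (β : ℕ → V)
    (hβ : ∀ i < k, β i ∈ Δpos)
    (hdecomp : lam - mu = ∑ i ∈ Finset.range k, β i)
    -- minimality of k
    (hmin : ∀ (m : ℕ) (γ : ℕ → V), (∀ i < m, γ i ∈ Δpos) →
        lam - mu = ∑ i ∈ Finset.range m, γ i → k ≤ m) :
    ∀ i ≤ k, ∀ j < i, -1 ≤ coroot (β j) (lam - ∑ t ∈ Finset.range i, β t) := by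
  intro i hik j hji
  have hβj : β j ∈ Δpos := hβ j (by omega)
  have hμi : lam - ∑ t ∈ range i, β t = mu + ∑ t ∈ Ico i k, β t := by
    rw [eq_add_of_sub_eq' hdecomp, ← sum_range_add_sum_Ico β hik]
    abel
  by_contra! hlt
  obtain ⟨t, ht, hneg⟩ : ∃ t ∈ Ico i k, coroot (β j) (β t) < 0 := by
    apply exists_lt_of_sum_lt
    rw [hμi, map_add, map_sum] at hlt
    rw [sum_const_zero]
    linarith [hmu (β j) hβj]
  obtain ⟨hit, htk⟩ := mem_Ico.1 ht
  exact add_notMem_of_length_minimal (S := (Δpos : Set V)) hβ hdecomp hmin (by omega) htk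
    (hkey _ hβj _ (hβ t htk) hneg)

theorem slices_intermediate_pairings_ge_neg_one
    {V : Type*} [AddCommGroup V] [Module ℝ V]
    (Δpos : Finset V)
    (coroot : V → Module.Dual ℝ V)
    (hcoroot_self : ∀ α ∈ Δpos, coroot α α = 2)
    (hkey : ∀ a ∈ Δpos, ∀ b ∈ Δpos, coroot a b < 0 → a + b ∈ Δpos)
    (lam mu : V)
    (hlam_dom : ∀ α ∈ Δpos, 0 ≤ coroot α lam)
    (hmu : ∀ α ∈ Δpos, -1 ≤ coroot α mu)
    (k : ℕ) (β : ℕ → V)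
    (hβ : ∀ i < k, β i ∈ Δpos)
    (hdecomp : lam - mu = ∑ i ∈ Finset.range k, β i)
    -- minimality of k
    (hmin : ∀ (m : ℕ) (γ : ℕ → V), (∀ i < m, γ i ∈ Δpos) →
        lam - mu = ∑ i ∈ Finset.range m, γ i → k ≤ m) :
    ∀ i ≤ k, ∀ j < i, -1 ≤ coroot (β j) (lam - ∑ t ∈ Finset.range i, β t) :=
  slices_intermediate_pairings_ge_neg_one_general Δpos coroot hkey lam mu hmu k β hβ hdecomp hmin
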